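/- Let m ≥ 2 and let f ∈ ℤ[x] have degree at most n, with g(x) = f(x+1). Then in the free group F on {a,s,t} both elements {{a}}_s^f · ({{a}}_t^g)⁻¹ and ^f{{a}}_s · (^g{{a}}_t)⁻¹ lie in the normal closure of R_m (i.e. {{a}}_s^{f(x)} = {{a}}_t^{f(x+1)} and ^{f(x)}{{a}}_s = ^{f(x+1)}{{a}}_t hold in Γ_m), and each has area less than K_m(n) := 10m²n² + 10. -/

import Mathlib

/-- The three generators of Baumslag's group. -/
inductive Letter : Type
  | a | s | t
  deriving DecidableEq

/-- The free group on `{a, s, t}`. -/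
abbrev F : Type := FreeGroup Letter

def a : F := FreeGroup.of Letter.a
def s : F := FreeGroup.of Letter.s
def t : F := FreeGroup.of Letter.t

/-- The commutator convention `[x, y] = x⁻¹ y⁻¹ x y`. -/
def cmm (x y : F) : F := x⁻¹ * y⁻¹ * x * y

/-- The relator set of Baumslag's presentation
`⟨a,s,t | [a, a^t] = 1, [s,t] = 1, a^s = a·a^t⟩`. -/
def RΓ : Set F :=
  {cmm a (t⁻¹ * a * t), cmm s t, (s⁻¹ * a * s)⁻¹ * a * (t⁻¹ * a * t)}

/-- `w` freely equals a product of `N` conjugates of elements of `R^±1`. -/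
def IsConjProd (R : Set F) (N : ℕ) (w : F) : Prop :=
  ∃ (u r : Fin N → F) (ε : Fin N → ℤ),
    (∀ i, r i ∈ R) ∧ (∀ i, ε i = 1 ∨ ε i = -1) ∧
    w = (List.ofFn fun i => u i * r i ^ ε i * (u i)⁻¹).prod

/-- `Area(w)`: the least `N` such that `w` freely equals a product of `N`
conjugates of relators or their inverses. -/
noncomputable def area (R : Set F) (w : F) : ℕ := sInf {N : ℕ | IsConjProd R N w}

/-- The relator set of the torsion analogue `Γ_m`:
`⟨a,s,t | [a, a^t] = 1, [s,t] = 1, a^s = a·a^t, a^m = 1⟩`. -/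
def Rm (m : ℕ) : Set F :=
  {cmm a (t⁻¹ * a * t), cmm s t, (s⁻¹ * a * s)⁻¹ * a * (t⁻¹ * a * t), a ^ m}

/-- `K_m(n) = 10 m² n² + 10`. -/
def Km (m n : ℕ) : ℕ := 10 * m ^ 2 * n ^ 2 + 10

/-- The residue in `{0, …, m−1}` of the `i`-th coefficient of `f` modulo `m`. -/
def cf (m : ℕ) (f : Polynomial ℤ) (i : ℕ) : ℕ := (f.coeff i % (m : ℤ)).toNat

/-- `{{a}}_s^f = a^{c_0}·s⁻¹·a^{c_1}·s⁻¹ ⋯ a^{c_n}·sⁿ`, freely equal to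
`∏_{i=0}^n s^{−i}·a^{c_i}·s^{i}`, where `c_i ∈ {0,…,m−1}` is `f`'s `i`-th coefficient
mod `m`. -/
def wS (m : ℕ) (f : Polynomial ℤ) (n : ℕ) : F :=
  ((List.range (n + 1)).map (fun i => (s ^ i)⁻¹ * a ^ cf m f i * s ^ i)).prod

/-- `{{a}}_t^f = ∏_{i=0}^n t^{−i}·a^{c_i}·t^{i}`. -/
def wT (m : ℕ) (f : Polynomial ℤ) (n : ℕ) : F :=
  ((List.range (n + 1)).map (fun i => (t ^ i)⁻¹ * a ^ cf m f i * t ^ i)).prod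

/-- `^f{{a}}_s = s^{−n}·a^{c_n}·s·a^{c_{n−1}} ⋯ s·a^{c_0}`, the reversed-order
product `∏_{i=n}^{0} s^{−i}·a^{c_i}·s^{i}`. -/
def wS' (m : ℕ) (f : Polynomial ℤ) (n : ℕ) : F :=
  ((List.range (n + 1)).reverse.map (fun i => (s ^ i)⁻¹ * a ^ cf m f i * s ^ i)).prod

/-- `^f{{a}}_t = t^{−n}·a^{c_n}·t·a^{c_{n−1}} ⋯ t·a^{c_0}`. -/
def wT' (m : ℕ) (f : Polynomial ℤ) (n : ℕ) : F :=
  ((List.range (n + 1)).reverse.map (fun i => (t ^ i)⁻¹ * a ^ cf m f i * t ^ i)).prod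

namespace BX

/-- A single conjugate of a relator or its inverse. -/
def Good (R : Set F) (w : F) : Prop :=
  ∃ u r, r ∈ R ∧ (w = u * r * u⁻¹ ∨ w = u * r⁻¹ * u⁻¹)

theorem Good.inv {R : Set F} {w : F} (h : Good R w) : Good R w⁻¹ := by
  obtain ⟨u, r, hr, h | h⟩ := h
  · exact ⟨u, r, hr, Or.inr (by rw [h]; group)⟩
  · exact ⟨u, r, hr, Or.inl (by rw [h]; group)⟩

theorem Good.conj {R : Set F} {w : F} (g : F) (h : Good R w) : Good R (g * w * g⁻¹) := by
  obtain ⟨u, r, hr, h | h⟩ := h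
  · exact ⟨g * u, r, hr, Or.inl (by rw [h]; group)⟩
  · exact ⟨g * u, r, hr, Or.inr (by rw [h]; group)⟩

/-- `w₁` and `w₂` differ by a product of at most `N` conjugates of relators. -/
def E (R : Set F) (N : ℕ) (w₁ w₂ : F) : Prop :=
  ∃ L : List F, L.length ≤ N ∧ (∀ x ∈ L, Good R x) ∧ w₁ = L.prod * w₂

theorem E.refl (R : Set F) (N : ℕ) (w : F) : E R N w w :=
  ⟨[], by simp, by simp, by simp⟩

theorem E.mono {R : Set F} {N M : ℕ} {w₁ w₂ : F} (h : E R N w₁ w₂) (hNM : N ≤ M) :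
    E R M w₁ w₂ := by
  obtain ⟨L, h1, h2, h3⟩ := h
  exact ⟨L, h1.trans hNM, h2, h3⟩

theorem E.trans {R : Set F} {N₁ N₂ : ℕ} {w₁ w₂ w₃ : F} (h : E R N₁ w₁ w₂)
    (h' : E R N₂ w₂ w₃) : E R (N₁ + N₂) w₁ w₃ := by
  obtain ⟨L, h1, h2, h3⟩ := h
  obtain ⟨L', h1', h2', h3'⟩ := h'
  refine ⟨L ++ L', by simpa using Nat.add_le_add h1 h1', ?_, by
    rw [h3, h3', List.prod_append, mul_assoc]⟩
  intro x hx
  rcases List.mem_append.1 hx with hx | hx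
  exacts [h2 x hx, h2' x hx]

theorem E.symm {R : Set F} {N : ℕ} {w₁ w₂ : F} (h : E R N w₁ w₂) : E R N w₂ w₁ := by
  obtain ⟨L, h1, h2, h3⟩ := h
  refine ⟨(L.map fun x => x⁻¹).reverse, by simpa using h1, ?_, ?_⟩
  · intro x hx
    simp only [List.mem_reverse, List.mem_map] at hx
    obtain ⟨y, hy, rfl⟩ := hx
    exact (h2 y hy).inv
  · rw [← List.prod_inv_reverse, h3]
    group

theorem conj_map_prod (g : F) (L : List F) :
    (L.map fun x => g * x * g⁻¹).prod = g * L.prod * g⁻¹ := by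
  induction L with
  | nil => simp
  | cons x L ih => simp [ih]

theorem E.mul_left {R : Set F} {N : ℕ} {w₁ w₂ : F} (g : F) (h : E R N w₁ w₂) :
    E R N (g * w₁) (g * w₂) := by
  obtain ⟨L, h1, h2, h3⟩ := h
  refine ⟨L.map fun x => g * x * g⁻¹, by simpa using h1, ?_, ?_⟩
  · intro x hx
    simp only [List.mem_map] at hx
    obtain ⟨y, hy, rfl⟩ := hx
    exact (h2 y hy).conj g
  · rw [conj_map_prod, h3]; group

theorem E.mul_right {R : Set F} {N : ℕ} {w₁ w₂ : F} (g : F) (h : E R N w₁ w₂) :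
    E R N (w₁ * g) (w₂ * g) := by
  obtain ⟨L, h1, h2, h3⟩ := h
  exact ⟨L, h1, h2, by rw [h3]; group⟩

theorem E.mul {R : Set F} {N₁ N₂ : ℕ} {u₁ u₂ v₁ v₂ : F} (h : E R N₁ u₁ u₂)
    (h' : E R N₂ v₁ v₂) : E R (N₁ + N₂) (u₁ * v₁) (u₂ * v₂) :=
  (h.mul_right v₁).trans (h'.mul_left u₂)

theorem E_congr {R : Set F} {N : ℕ} {u v u' v' : F} (h : E R N u v) (hu : u = u')
    (hv : v = v') : E R N u' v' := hu ▸ hv ▸ h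

theorem E.rel {R : Set F} {r : F} (hr : r ∈ R) (u : F) {w₁ w₂ : F}
    (hw : w₁ = u * r * u⁻¹ * w₂) : E R 1 w₁ w₂ :=
  ⟨[u * r * u⁻¹], by simp, by
    intro x hx
    rw [List.mem_singleton] at hx
    exact ⟨u, r, hr, Or.inl hx⟩, by simpa using hw⟩

theorem E.relinv {R : Set F} {r : F} (hr : r ∈ R) (u : F) {w₁ w₂ : F}
    (hw : w₁ = u * r⁻¹ * u⁻¹ * w₂) : E R 1 w₁ w₂ :=
  ⟨[u * r⁻¹ * u⁻¹], by simp, by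
    intro x hx
    rw [List.mem_singleton] at hx
    exact ⟨u, r, hr, Or.inr hx⟩, by simpa using hw⟩

end BX
namespace BX

/-- `a^t`. -/
def b : F := t⁻¹ * a * t

theorem r1_mem (m : ℕ) : cmm a (t⁻¹ * a * t) ∈ Rm m := by simp [Rm]
theorem r2_mem (m : ℕ) : cmm s t ∈ Rm m := by simp [Rm]
theorem r3_mem (m : ℕ) : (s⁻¹ * a * s)⁻¹ * a * (t⁻¹ * a * t) ∈ Rm m := by simp [Rm]
theorem r4_mem (m : ℕ) : a ^ m ∈ Rm m := by simp [Rm]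

theorem E_ab (m : ℕ) : E (Rm m) 1 (a * b) (b * a) :=
  E.rel (r1_mem m) (a * b) (by simp only [cmm, b]; group)

theorem E_ba (m : ℕ) : E (Rm m) 1 (b * a) (a * b) := (E_ab m).symm

theorem E_move1 (m : ℕ) : E (Rm m) 1 (s⁻¹ * a) (a * b * s⁻¹) :=
  E.relinv (r3_mem m) (s⁻¹ * a * s) (by simp only [b]; group)

theorem E_move1' (m : ℕ) : E (Rm m) 1 (a * s) (s * (a * b)) :=
  E.relinv (r3_mem m) (a * s) (by simp only [b]; group)

theorem E_swap1 (m : ℕ) : E (Rm m) 1 (s⁻¹ * t⁻¹) (t⁻¹ * s⁻¹) :=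
  E.rel (r2_mem m) 1 (by simp only [cmm]; group)

theorem E_swap2 (m : ℕ) : E (Rm m) 1 (t * s) (s * t) :=
  E.relinv (r2_mem m) (t * s) (by simp only [cmm]; group)

theorem E_am (m : ℕ) : E (Rm m) 1 (a ^ m) 1 :=
  E.rel (r4_mem m) 1 (by group)

theorem E_move (m : ℕ) : ∀ c : ℕ, E (Rm m) c (s⁻¹ * a ^ c) ((a * b) ^ c * s⁻¹)
  | 0 => E_congr (E.refl _ 0 s⁻¹) (by group) (by group)
  | (c + 1) => by
    have h1 := (E_move m c).mul_right a
    have h2 := (E_move1 m).mul_left ((a * b) ^ c)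
    refine E_congr ((h1.trans (E_congr h2 (by group) rfl)).mono (by omega)) (by
      rw [pow_succ]; group) (by rw [pow_succ]; group)

theorem E_move' (m : ℕ) : ∀ c : ℕ, E (Rm m) c (a ^ c * s) (s * (a * b) ^ c)
  | 0 => E_congr (E.refl _ 0 s) (by group) (by group)
  | (c + 1) => by
    have h1 := (E_move' m c).mul_left a
    have h2 := (E_move1' m).mul_right ((a * b) ^ c)
    refine E_congr (((E_congr h1 (by rw [pow_succ']; group) rfl).trans
      (E_congr h2 (by group) rfl)).mono (by omega)) rfl (by simp [pow_succ', mul_assoc])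

theorem E_powrel (m : ℕ) : ∀ q : ℕ, E (Rm m) q ((a ^ m) ^ q) 1
  | 0 => E_congr (E.refl _ 0 1) (by group) rfl
  | (q + 1) => by
    have := ((E_powrel m q).mul (E_am m)).mono (le_refl (q + 1))
    exact E_congr this (by rw [pow_succ]) (by group)

theorem E_apow_mod (m : ℕ) (c : ℕ) : E (Rm m) (c / m) (a ^ c) (a ^ (c % m)) := by
  have he : a ^ c = (a ^ m) ^ (c / m) * a ^ (c % m) := by
    rw [← pow_mul, ← pow_add]
    congr 1
    exact (Nat.div_add_mod c m).symm
  have := ((E_powrel m (c / m)).mul_right (a ^ (c % m))).mono (le_refl _)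
  exact E_congr this he.symm (by group)

theorem E_pow_comm {R : Set F} {x y : F} (hc : E R 1 (x * y) (y * x)) :
    ∀ c : ℕ, E R c (x * y ^ c) (y ^ c * x)
  | 0 => E_congr (E.refl _ 0 x) (by group) (by group)
  | (c + 1) => by
    have h1 := (E_pow_comm hc c).mul_right y
    have h2 := hc.mul_left (y ^ c)
    refine E_congr ((h1.trans (E_congr h2 (by group) rfl)).mono (by omega))
      (by rw [pow_succ]; group) (by rw [pow_succ]; group)

theorem E_reorder {R : Set F} {x y : F} (hc : E R 1 (y * x) (x * y)) :
    ∀ c : ℕ, E R (c * c) ((x * y) ^ c) (x ^ c * y ^ c)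
  | 0 => E_congr (E.refl _ 0 1) (by group) (by group)
  | (c + 1) => by
    have h1 := (E_reorder hc c).mul_right (x * y)
    have h2 := ((E_pow_comm hc.symm c).symm.mul_left (x ^ c)).mul_right y
    refine E_congr ((h1.trans (E_congr h2 (by group) rfl)).mono (by nlinarith))
      (by rw [pow_succ]) (by rw [pow_succ x, pow_succ y]; group)

theorem E_blocks {R : Set F} {x y : F} (hc : E R 1 (x * y) (y * x)) (d : ℕ) :
    ∀ c : ℕ, E R ((c + 1) * d) (x ^ c * y ^ d) (y ^ d * x ^ c)
  | 0 => E_congr (E.refl _ ((0 + 1) * d) (y ^ d)) (by group) (by group)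
  | (c + 1) => by
    have h1 := (E_blocks hc d c).mul_left x
    have h2 := (E_pow_comm hc d).mul_right (x ^ c)
    refine E_congr ((h1.trans (E_congr h2 (by group) rfl)).mono (by nlinarith))
      (by rw [pow_succ']; group) (by rw [pow_succ']; group)

theorem conj_pow (g x : F) : ∀ c : ℕ, (g⁻¹ * x * g) ^ c = g⁻¹ * x ^ c * g
  | 0 => by group
  | (c + 1) => by rw [pow_succ, conj_pow g x c, pow_succ]; group

theorem b_pow (c : ℕ) : b ^ c = t⁻¹ * a ^ c * t := conj_pow t a c

end BX
namespace BX

/-- Nested form of `{{a}}` words. -/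
def gw (x : F) : ℕ → (ℕ → ℕ) → F
  | 0, e => a ^ e 0
  | (N + 1), e => a ^ e 0 * (x⁻¹ * gw x N (fun j => e (j + 1)) * x)

/-- Nested form of `^{{a}}` words. -/
def gw' (x : F) : ℕ → (ℕ → ℕ) → F
  | 0, e => a ^ e 0
  | (N + 1), e => x⁻¹ * gw' x N (fun j => e (j + 1)) * x * a ^ e 0

theorem gw_congr (x : F) : ∀ (N : ℕ) (e e' : ℕ → ℕ), (∀ j ≤ N, e j = e' j) →
    gw x N e = gw x N e'
  | 0, e, e', h => by simp [gw, h 0 (by omega)]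
  | (N + 1), e, e', h => by
    simp only [gw, h 0 (by omega)]
    rw [gw_congr x N _ _ (fun j hj => h (j + 1) (by omega))]

theorem gw'_congr (x : F) : ∀ (N : ℕ) (e e' : ℕ → ℕ), (∀ j ≤ N, e j = e' j) →
    gw' x N e = gw' x N e'
  | 0, e, e', h => by simp [gw', h 0 (by omega)]
  | (N + 1), e, e', h => by
    simp only [gw', h 0 (by omega)]
    rw [gw'_congr x N _ _ (fun j hj => h (j + 1) (by omega))]

/-- Multiplication of the coefficient sequence by `x + 1`, reduced mod `m`. -/
def sA (m : ℕ) (e : ℕ → ℕ) : ℕ → ℕ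
  | 0 => e 0
  | (j + 1) => (e (j + 1) + e j) % m

/-- Adding `c` to the head coefficient, reduced mod `m`. -/
def mg (m c : ℕ) (g : ℕ → ℕ) : ℕ → ℕ := fun j => if j = 0 then (c + g 0) % m else g j

theorem mg_succ (m c : ℕ) (g : ℕ → ℕ) : (fun j => mg m c g (j + 1)) = fun j => g (j + 1) := by
  funext j; simp [mg]

/-- Merging a power of `a` into the head of a `t`-word. -/
theorem E_merge (m c : ℕ) (g : ℕ → ℕ) : ∀ N : ℕ,
    E (Rm m) ((c + g 0) / m) (a ^ c * gw t N g) (gw t N (mg m c g))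
  | 0 => by
    have := E_apow_mod m (c + g 0)
    exact E_congr this (by simp [gw, pow_add]) (by simp [gw, mg])
  | (N + 1) => by
    have := (E_apow_mod m (c + g 0)).mul_right (t⁻¹ * gw t N (fun j => g (j + 1)) * t)
    refine E_congr this (by simp only [gw]; rw [pow_add]; group) ?_
    simp only [gw, mg_succ]
    rfl

theorem E_merge' (m c : ℕ) (g : ℕ → ℕ) : ∀ N : ℕ,
    E (Rm m) ((g 0 + c) / m) (gw' t N g * a ^ c) (gw' t N (mg m c g))
  | 0 => by
    have := E_apow_mod m (g 0 + c)
    refine E_congr this (by simp [gw', pow_add]) (by simp [gw', mg, Nat.add_comm])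
  | (N + 1) => by
    have := (E_apow_mod m (g 0 + c)).mul_left (t⁻¹ * gw' t N (fun j => g (j + 1)) * t)
    refine E_congr this (by simp only [gw']; rw [pow_add]; group) ?_
    simp only [gw', mg_succ, mg, Nat.add_comm c (g 0)]
    rfl

end BX
namespace BX

theorem E_level (m : ℕ) (hm : 2 ≤ m) : ∀ (N : ℕ) (e : ℕ → ℕ), (∀ j, e j < m) →
    e (N + 1) = 0 →
    E (Rm m) ((N + 1) * (2 * m * m + m + 3)) (s⁻¹ * gw t N e * s) (gw t (N + 1) (sA m e))
  | 0, e, he, hz => by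
    have h1 := (E_move m (e 0)).mul_right s
    have h2 := E_reorder (E_ba m) (e 0)
    have chain := h1.trans (E_congr h2 (by group) rfl)
    refine E_congr (chain.mono (by nlinarith [he 0])) (by simp only [gw]) ?_
    have h3 : gw t 1 (sA m e) = a ^ e 0 * (t⁻¹ * a ^ e 0 * t) := by
      simp [gw, sA, hz, Nat.mod_eq_of_lt (he 0)]
    rw [h3, b_pow]
  | (N + 1), e, he, hz => by
    set e' : ℕ → ℕ := fun j => e (j + 1) with he'def
    set Y := gw t N e' with hY
    have IH := E_level m hm N e' (fun j => he (j + 1)) hz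
    set Z := gw t (N + 1) (sA m e') with hZ
    have c1 := (E_move m (e 0)).mul_right (t⁻¹ * Y * (t * s))
    have c2 := ((E_swap1 m).mul_left ((a * b) ^ e 0)).mul_right (Y * (t * s))
    have c3 := (E_swap2 m).mul_left ((a * b) ^ e 0 * (t⁻¹ * (s⁻¹ * Y)))
    have c4 := (IH.mul_left ((a * b) ^ e 0 * t⁻¹)).mul_right t
    have c5 := (E_reorder (E_ba m) (e 0)).mul_right (t⁻¹ * Z * t)
    have c6 := ((E_merge m (e 0) (sA m e') (N + 1)).mul_left (a ^ e 0 * t⁻¹)).mul_right t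
    have chain := ((((c1.trans (E_congr c2 (by group) rfl)).trans
      (E_congr c3 (by group) rfl)).trans
      (E_congr c4 (by rw [hY]; group) rfl)).trans
      (E_congr c5 (by group) rfl)).trans
      (E_congr c6 (by rw [b_pow, hZ]; group) rfl)
    have hWeq : gw t (N + 1) (mg m (e 0) (sA m e')) = gw t (N + 1) (fun j => sA m e (j + 1)) := by
      refine gw_congr t (N + 1) _ _ (fun j _ => ?_)
      cases j with
      | zero => simp [mg, sA, he'def, Nat.add_comm]
      | succ k => simp [mg, sA, he'def]
    have hdiv : (e 0 + sA m e' 0) / m ≤ 1 := by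
      have h1 : sA m e' 0 = e 1 := rfl
      have h2 := (Nat.div_lt_iff_lt_mul (show 0 < m by omega)).mpr
        (show e 0 + sA m e' 0 < 2 * m by rw [h1]; have := he 0; have := he 1; omega)
      omega
    refine E_congr (chain.mono ?_) (by simp only [gw, hY, he'def]; group) ?_
    · have h0 := he 0
      nlinarith
    · rw [hWeq]; simp only [gw, sA]; group

theorem E_level' (m : ℕ) (hm : 2 ≤ m) : ∀ (N : ℕ) (e : ℕ → ℕ), (∀ j, e j < m) →
    e (N + 1) = 0 →
    E (Rm m) ((N + 1) * (2 * m * m + m + 3)) (s⁻¹ * gw' t N e * s) (gw' t (N + 1) (sA m e))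
  | 0, e, he, hz => by
    have h1 := (E_move m (e 0)).mul_right s
    have h2 := (E_reorder (E_ba m) (e 0)).trans (E_blocks (E_ab m) (e 0) (e 0))
    have chain := h1.trans (E_congr h2 (by group) rfl)
    refine E_congr (chain.mono (by nlinarith [he 0])) (by simp only [gw']) ?_
    have h3 : gw' t 1 (sA m e) = t⁻¹ * a ^ e 0 * t * a ^ e 0 := by
      simp [gw', sA, hz, Nat.mod_eq_of_lt (he 0)]
    rw [h3, b_pow]
  | (N + 1), e, he, hz => by
    set e' : ℕ → ℕ := fun j => e (j + 1) with he'def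
    set Y := gw' t N e' with hY
    have IH := E_level' m hm N e' (fun j => he (j + 1)) hz
    set Z := gw' t (N + 1) (sA m e') with hZ
    have c1 := (E_move' m (e 0)).mul_left (s⁻¹ * (t⁻¹ * Y * t))
    have c2 := ((E_swap2 m).mul_left (s⁻¹ * (t⁻¹ * Y))).mul_right ((a * b) ^ e 0)
    have c3 := (E_swap1 m).mul_right (Y * (s * (t * (a * b) ^ e 0)))
    have c4 := (IH.mul_left t⁻¹).mul_right (t * (a * b) ^ e 0)
    have c5 := ((E_reorder (E_ba m) (e 0)).trans
      (E_blocks (E_ab m) (e 0) (e 0))).mul_left (t⁻¹ * Z * t)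
    have c6 := ((E_merge' m (e 0) (sA m e') (N + 1)).mul_left t⁻¹).mul_right (t * a ^ e 0)
    have chain := ((((c1.trans (E_congr c2 (by group) rfl)).trans
      (E_congr c3 (by group) rfl)).trans
      (E_congr c4 (by rw [hY]; group) rfl)).trans
      (E_congr c5 (by group) rfl)).trans
      (E_congr c6 (by rw [b_pow, hZ]; group) rfl)
    have hWeq : gw' t (N + 1) (mg m (e 0) (sA m e')) = gw' t (N + 1) (fun j => sA m e (j + 1)) := by
      refine gw'_congr t (N + 1) _ _ (fun j _ => ?_)
      cases j with
      | zero => simp [mg, sA, he'def, Nat.add_comm]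
      | succ k => simp [mg, sA, he'def]
    have hdiv : (sA m e' 0 + e 0) / m ≤ 1 := by
      have h1 : sA m e' 0 = e 1 := rfl
      have h2 := (Nat.div_lt_iff_lt_mul (show 0 < m by omega)).mpr
        (show sA m e' 0 + e 0 < 2 * m by rw [h1]; have := he 0; have := he 1; omega)
      omega
    refine E_congr (chain.mono ?_) (by simp only [gw', hY, he'def]; group) ?_
    · have h0 := he 0
      nlinarith
    · rw [hWeq]; simp only [gw', sA]; group

end BX
namespace BX

open Polynomial

theorem cf_lt {m : ℕ} (hm : 0 < m) (f : Polynomial ℤ) (j : ℕ) : cf m f j < m := by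
  have h1 := Int.emod_nonneg (f.coeff j) (show (m : ℤ) ≠ 0 by exact_mod_cast hm.ne')
  have h2 := Int.emod_lt_of_pos (f.coeff j) (show (0 : ℤ) < m by exact_mod_cast hm)
  simp only [cf]
  omega

theorem cf_add {m : ℕ} (hm : 0 < m) (x y : ℤ) :
    ((x + y) % (m : ℤ)).toNat = ((x % m).toNat + (y % m).toNat) % m := by
  have hx : 0 ≤ x % m := Int.emod_nonneg x (by exact_mod_cast hm.ne')
  have hy : 0 ≤ y % m := Int.emod_nonneg y (by exact_mod_cast hm.ne')
  have h1 : (x + y) % (m : ℤ) = ((x % m) + (y % m)) % m := by rw [Int.add_emod]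
  set u := (x % m).toNat with hu
  set v := (y % m).toNat with hv
  have hx' : x % m = (u : ℤ) := (Int.toNat_of_nonneg hx).symm
  have hy' : y % m = (v : ℤ) := (Int.toNat_of_nonneg hy).symm
  rw [h1, hx', hy', ← Nat.cast_add, ← Int.natCast_mod, Int.toNat_natCast]

theorem E_main (m : ℕ) (hm : 2 ≤ m) : ∀ (N : ℕ) (p : Polynomial ℤ), p.natDegree ≤ N →
    E (Rm m) (N * (N + 1) * (2 * m * m + m + 3) + N)
      (gw s N (cf m p)) (gw t N (cf m (p.comp (X + 1))))
  | 0, p, hdeg => by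
    obtain ⟨c, rfl⟩ : ∃ c, p = C c := ⟨p.coeff 0, eq_C_of_natDegree_le_zero hdeg⟩
    simp only [C_comp]
    exact E.refl _ _ _
  | (N + 1), p, hdeg => by
    have hm0 : 0 < m := by omega
    set p' := p.divX with hp'
    set q' := p'.comp (X + 1) with hq'
    have hd' : p'.natDegree ≤ N := by
      refine natDegree_le_iff_coeff_eq_zero.mpr fun j hj => ?_
      rw [hp', coeff_divX]
      exact natDegree_le_iff_coeff_eq_zero.mp hdeg _ (by omega)
    have h1 : ((X : Polynomial ℤ) + 1).natDegree = 1 := by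
      rw [← Polynomial.C_1]; exact natDegree_X_add_C 1
    have hdq : q'.natDegree ≤ N := by
      refine le_trans (natDegree_comp_le) ?_
      rw [h1, mul_one]; exact hd'
    have hz : cf m q' (N + 1) = 0 := by
      rw [cf, coeff_eq_zero_of_natDegree_lt (lt_of_le_of_lt hdq (by omega))]
      simp
    have hcfsucc : (fun j => cf m p (j + 1)) = cf m p' := by
      funext j; simp [cf, hp', coeff_divX]
    have hP : p.comp ((X : Polynomial ℤ) + 1) = (X + 1) * q' + C (p.coeff 0) := by
      conv_lhs => rw [← Polynomial.X_mul_divX_add p]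
      simp [add_comp, mul_comp]; exact Or.inl rfl
    have hco : (p.comp ((X : Polynomial ℤ) + 1)).coeff 0 = p.coeff 0 + q'.coeff 0 := by
      rw [hP, add_mul, one_mul]
      simp [coeff_add, coeff_C, mul_coeff_zero]
      ring
    have hcs : ∀ j : ℕ, (p.comp ((X : Polynomial ℤ) + 1)).coeff (j + 1) =
        q'.coeff (j + 1) + q'.coeff j := by
      intro j
      rw [hP, add_mul, one_mul, coeff_add, coeff_add, coeff_X_mul, coeff_C,
        if_neg (Nat.succ_ne_zero j)]
      ring
    have IH := E_main m hm N p' hd'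
    have c1 := (IH.mul_left s⁻¹).mul_right s
    have c2 := E_level m hm N (cf m q') (cf_lt hm0 q') hz
    have c3 := E_merge m (cf m p 0) (sA m (cf m q')) (N + 1)
    have chain := ((c1.mul_left (a ^ cf m p 0)).trans
      ((c2.mul_left (a ^ cf m p 0)).mono (le_refl _))).trans c3
    have hfin : gw t (N + 1) (mg m (cf m p 0) (sA m (cf m q'))) =
        gw t (N + 1) (cf m (p.comp (X + 1))) := by
      refine gw_congr t (N + 1) _ _ (fun j _ => ?_)
      cases j with
      | zero =>
        rw [show mg m (cf m p 0) (sA m (cf m q')) 0 = (cf m p 0 + cf m q' 0) % m from by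
          simp [mg, sA]]
        simp only [cf, hco]
        rw [cf_add hm0]
      | succ k =>
        rw [show mg m (cf m p 0) (sA m (cf m q')) (k + 1) =
            (cf m q' (k + 1) + cf m q' k) % m from by simp [mg, sA]]
        simp only [cf, hcs k]
        rw [cf_add hm0]
    have hdiv : (cf m p 0 + sA m (cf m q') 0) / m ≤ 1 := by
      have hlt : cf m p 0 + sA m (cf m q') 0 < 2 * m := by
        have := cf_lt hm0 p 0
        have : cf m q' 0 < m := cf_lt hm0 q' 0
        simp only [sA]
        omega
      have := (Nat.div_lt_iff_lt_mul hm0).mpr hlt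
      omega
    refine E_congr (chain.mono ?_) ?_ ?_
    · have h2 : (N + 1) * (N + 1 + 1) * (2 * m * m + m + 3) =
          N * (N + 1) * (2 * m * m + m + 3) + 2 * ((N + 1) * (2 * m * m + m + 3)) := by ring
      have h3 : 0 < (N + 1) * (2 * m * m + m + 3) := by positivity
      linarith [hdiv, h2, h3]
    · simp only [gw, hcfsucc]
    · rw [hfin]
  termination_by N => N

theorem E_main' (m : ℕ) (hm : 2 ≤ m) : ∀ (N : ℕ) (p : Polynomial ℤ), p.natDegree ≤ N →
    E (Rm m) (N * (N + 1) * (2 * m * m + m + 3) + N)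
      (gw' s N (cf m p)) (gw' t N (cf m (p.comp (X + 1))))
  | 0, p, hdeg => by
    obtain ⟨c, rfl⟩ : ∃ c, p = C c := ⟨p.coeff 0, eq_C_of_natDegree_le_zero hdeg⟩
    simp only [C_comp]
    exact E.refl _ _ _
  | (N + 1), p, hdeg => by
    have hm0 : 0 < m := by omega
    set p' := p.divX with hp'
    set q' := p'.comp (X + 1) with hq'
    have hd' : p'.natDegree ≤ N := by
      refine natDegree_le_iff_coeff_eq_zero.mpr fun j hj => ?_
      rw [hp', coeff_divX]
      exact natDegree_le_iff_coeff_eq_zero.mp hdeg _ (by omega)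
    have h1 : ((X : Polynomial ℤ) + 1).natDegree = 1 := by
      rw [← Polynomial.C_1]; exact natDegree_X_add_C 1
    have hdq : q'.natDegree ≤ N := by
      refine le_trans (natDegree_comp_le) ?_
      rw [h1, mul_one]; exact hd'
    have hz : cf m q' (N + 1) = 0 := by
      rw [cf, coeff_eq_zero_of_natDegree_lt (lt_of_le_of_lt hdq (by omega))]
      simp
    have hcfsucc : (fun j => cf m p (j + 1)) = cf m p' := by
      funext j; simp [cf, hp', coeff_divX]
    have hP : p.comp ((X : Polynomial ℤ) + 1) = (X + 1) * q' + C (p.coeff 0) := by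
      conv_lhs => rw [← Polynomial.X_mul_divX_add p]
      simp [add_comp, mul_comp]; exact Or.inl rfl
    have hco : (p.comp ((X : Polynomial ℤ) + 1)).coeff 0 = p.coeff 0 + q'.coeff 0 := by
      rw [hP, add_mul, one_mul]
      simp [coeff_add, coeff_C, mul_coeff_zero]
      ring
    have hcs : ∀ j : ℕ, (p.comp ((X : Polynomial ℤ) + 1)).coeff (j + 1) =
        q'.coeff (j + 1) + q'.coeff j := by
      intro j
      rw [hP, add_mul, one_mul, coeff_add, coeff_add, coeff_X_mul, coeff_C,
        if_neg (Nat.succ_ne_zero j)]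
      ring
    have IH := E_main' m hm N p' hd'
    have c1 := ((IH.mul_left s⁻¹).mul_right s).mul_right (a ^ cf m p 0)
    have c2 := (E_level' m hm N (cf m q') (cf_lt hm0 q') hz).mul_right (a ^ cf m p 0)
    have c3 := E_merge' m (cf m p 0) (sA m (cf m q')) (N + 1)
    have chain := (c1.trans (c2.mono (le_refl _))).trans c3
    have hfin : gw' t (N + 1) (mg m (cf m p 0) (sA m (cf m q'))) =
        gw' t (N + 1) (cf m (p.comp (X + 1))) := by
      refine gw'_congr t (N + 1) _ _ (fun j _ => ?_)
      cases j with
      | zero =>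
        rw [show mg m (cf m p 0) (sA m (cf m q')) 0 = (cf m p 0 + cf m q' 0) % m from by
          simp [mg, sA]]
        simp only [cf, hco]
        rw [cf_add hm0]
      | succ k =>
        rw [show mg m (cf m p 0) (sA m (cf m q')) (k + 1) =
            (cf m q' (k + 1) + cf m q' k) % m from by simp [mg, sA]]
        simp only [cf, hcs k]
        rw [cf_add hm0]
    have hdiv : (sA m (cf m q') 0 + cf m p 0) / m ≤ 1 := by
      have hlt : sA m (cf m q') 0 + cf m p 0 < 2 * m := by
        have := cf_lt hm0 p 0
        have : cf m q' 0 < m := cf_lt hm0 q' 0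
        simp only [sA]
        omega
      have := (Nat.div_lt_iff_lt_mul hm0).mpr hlt
      omega
    refine E_congr (chain.mono ?_) ?_ ?_
    · have h2 : (N + 1) * (N + 1 + 1) * (2 * m * m + m + 3) =
          N * (N + 1) * (2 * m * m + m + 3) + 2 * ((N + 1) * (2 * m * m + m + 3)) := by ring
      have h3 : 0 < (N + 1) * (2 * m * m + m + 3) := by positivity
      linarith [hdiv, h2, h3]
    · simp only [gw', hcfsucc]
    · rw [hfin]
  termination_by N => N

end BX
namespace BX

theorem map_conj_prod (g : F) (L : List ℕ) (h : ℕ → F) :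
    (L.map fun i => g⁻¹ * h i * g).prod = g⁻¹ * (L.map h).prod * g := by
  induction L with
  | nil => simp
  | cons i L ih => simp [ih]; group

theorem listform (x : F) : ∀ (N : ℕ) (e : ℕ → ℕ),
    ((List.range (N + 1)).map (fun i => (x ^ i)⁻¹ * a ^ e i * x ^ i)).prod = gw x N e
  | 0, e => by simp [gw, List.range_succ]
  | (N + 1), e => by
    rw [List.range_succ_eq_map, List.map_cons, List.map_map, List.prod_cons]
    have hf : ((fun i => (x ^ i)⁻¹ * a ^ e i * x ^ i) ∘ Nat.succ) =
        fun i => x⁻¹ * ((x ^ i)⁻¹ * a ^ e (i + 1) * x ^ i) * x := by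
      funext i
      simp only [Function.comp, Nat.succ_eq_add_one, pow_succ, mul_inv_rev, mul_assoc]
    rw [hf, map_conj_prod, listform x N (fun j => e (j + 1))]
    simp only [gw, pow_zero]
    group

theorem listform' (x : F) : ∀ (N : ℕ) (e : ℕ → ℕ),
    ((List.range (N + 1)).reverse.map (fun i => (x ^ i)⁻¹ * a ^ e i * x ^ i)).prod = gw' x N e
  | 0, e => by simp [gw', List.range_succ]
  | (N + 1), e => by
    rw [List.range_succ_eq_map, List.reverse_cons, List.map_append, List.prod_append,
      ← List.map_reverse, List.map_map]
    have hf : ((fun i => (x ^ i)⁻¹ * a ^ e i * x ^ i) ∘ Nat.succ) =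
        fun i => x⁻¹ * ((x ^ i)⁻¹ * a ^ e (i + 1) * x ^ i) * x := by
      funext i
      simp only [Function.comp, Nat.succ_eq_add_one, pow_succ, mul_inv_rev, mul_assoc]
    rw [hf, map_conj_prod, listform' x N (fun j => e (j + 1))]
    simp only [gw', List.map_cons, List.map_nil, List.prod_cons, List.prod_nil, pow_zero,
      inv_one, one_mul, mul_one]

theorem wS_eq (m : ℕ) (f : Polynomial ℤ) (n : ℕ) : wS m f n = gw s n (cf m f) :=
  listform s n (cf m f)

theorem wT_eq (m : ℕ) (f : Polynomial ℤ) (n : ℕ) : wT m f n = gw t n (cf m f) :=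
  listform t n (cf m f)

theorem wS'_eq (m : ℕ) (f : Polynomial ℤ) (n : ℕ) : wS' m f n = gw' s n (cf m f) :=
  listform' s n (cf m f)

theorem wT'_eq (m : ℕ) (f : Polynomial ℤ) (n : ℕ) : wT' m f n = gw' t n (cf m f) :=
  listform' t n (cf m f)

theorem isConjProd_of_good {R : Set F} (L : List F) (hL : ∀ x ∈ L, Good R x) :
    IsConjProd R L.length L.prod := by
  have hx : ∀ i : Fin L.length, ∃ q : F × F, q.2 ∈ R ∧ ∃ ε : ℤ, (ε = 1 ∨ ε = -1) ∧
      L.get i = q.1 * q.2 ^ ε * q.1⁻¹ := by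
    intro i
    obtain ⟨u, r, hr, h | h⟩ := hL _ (List.get_mem L i)
    · exact ⟨(u, r), hr, 1, Or.inl rfl, by simpa [zpow_one] using h⟩
    · exact ⟨(u, r), hr, -1, Or.inr rfl, by simpa [zpow_neg_one] using h⟩
  choose q hq ε hε hw using hx
  refine ⟨fun i => (q i).1, fun i => (q i).2, ε, hq, hε, ?_⟩
  have h1 : (fun i : Fin L.length => (q i).1 * (q i).2 ^ ε i * ((q i).1)⁻¹) = L.get :=
    funext fun i => (hw i).symm
  rw [h1, List.ofFn_get]

theorem final_of_E {m n C : ℕ} {w₁ w₂ : F} (h : E (Rm m) C w₁ w₂) (hC : C < Km m n) :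
    w₁ * w₂⁻¹ ∈ Subgroup.normalClosure (Rm m) ∧ area (Rm m) (w₁ * w₂⁻¹) < Km m n := by
  obtain ⟨L, hlen, hgood, hw⟩ := h
  have hprod : w₁ * w₂⁻¹ = L.prod := by rw [hw]; group
  constructor
  · rw [hprod]
    refine Subgroup.list_prod_mem _ (fun x hx => ?_)
    obtain ⟨u, r, hr, hxx | hxx⟩ := hgood x hx
    · rw [hxx]
      exact Subgroup.Normal.conj_mem (Subgroup.normalClosure_normal) _
        (Subgroup.subset_normalClosure hr) u
    · rw [hxx]
      exact Subgroup.Normal.conj_mem (Subgroup.normalClosure_normal) _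
        (inv_mem (Subgroup.subset_normalClosure hr)) u
  · have hmem : IsConjProd (Rm m) L.length (w₁ * w₂⁻¹) := by
      rw [hprod]; exact isConjProd_of_good L hgood
    exact lt_of_le_of_lt (Nat.sInf_le hmem) (lt_of_le_of_lt hlen hC)

theorem cost_lt {m : ℕ} (hm : 2 ≤ m) (n : ℕ) :
    n * (n + 1) * (2 * m * m + m + 3) + n < Km m n := by
  rcases Nat.eq_zero_or_pos n with rfl | hn
  · simp [Km]
  · have hmm : 2 * m * m + m + 3 ≤ 4 * (m * m) := by nlinarith
    have h1 : n + 1 ≤ 2 * n := by omega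
    have h2 : n * (n + 1) * (2 * m * m + m + 3) ≤ n * (2 * n) * (4 * (m * m)) := by
      exact Nat.mul_le_mul (Nat.mul_le_mul_left _ h1) hmm
    have h3 : n ≤ m * m * (n * n) := by nlinarith
    have h4 : Km m n = 10 * (m * m) * (n * n) + 10 := by
      simp [Km]; ring
    rw [h4]
    nlinarith

end BX

open Polynomial in
/-- Lemma 4.1: for `m ≥ 2` and `f ∈ ℤ[x]` of degree at most `n`, in `Γ_m` one has
`{{a}}_s^{f(x)} = {{a}}_t^{f(x+1)}` and `^{f(x)}{{a}}_s = ^{f(x+1)}{{a}}_t`; i.e. both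
difference words lie in the normal closure of the relators of `Γ_m`, each with area
less than `K_m(n) = 10m²n² + 10`. -/
theorem better_x_plus_one_lemma (m : ℕ) (hm : 2 ≤ m) (f : Polynomial ℤ) (n : ℕ)
    (hdeg : f.natDegree ≤ n) :
    (wS m f n * (wT m (f.comp (X + 1)) n)⁻¹ ∈ Subgroup.normalClosure (Rm m) ∧
      area (Rm m) (wS m f n * (wT m (f.comp (X + 1)) n)⁻¹) < Km m n) ∧
    (wS' m f n * (wT' m (f.comp (X + 1)) n)⁻¹ ∈ Subgroup.normalClosure (Rm m) ∧
      area (Rm m) (wS' m f n * (wT' m (f.comp (X + 1)) n)⁻¹) < Km m n) := by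
  have hC := BX.cost_lt hm n
  constructor
  · exact BX.final_of_E (BX.E_congr (BX.E_main m hm n f hdeg) (BX.wS_eq m f n).symm
      (BX.wT_eq m (f.comp (X + 1)) n).symm) hC
  · exact BX.final_of_E (BX.E_congr (BX.E_main' m hm n f hdeg) (BX.wS'_eq m f n).symm
      (BX.wT'_eq m (f.comp (X + 1)) n).symm) hC
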